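/- In a pointed finitely complete category, with notation as for the object R □₀ S (the limit of triples (x,a,y) with (k(x),a) ∈ S and (a,l(y)) ∈ R) and θ : R □₀ S → X × Y the canonical comparison, the kernel of θ is isomorphic to the pullback X ×_A Y of k : X → A and l : Y → A. -/

import Mathlib

open CategoryTheory CategoryTheory.Limits

universe v u

noncomputable section

variable {C : Type u} [Category.{v} C]

/-- A pair of morphisms with common codomain is jointly strongly epimorphic:
it has the lifting property against all monomorphisms. -/
def JointlyStrongEpi {X Y Z : C} (f : X ⟶ Z) (g : Y ⟶ Z) : Prop :=
  ∀ {U V : C} (m : U ⟶ V) (_ : Mono m) (h : Z ⟶ V) (u : X ⟶ U) (v : Y ⟶ U),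
    u ≫ m = f ≫ h → v ≫ m = g ≫ h → ∃ t : Z ⟶ U, t ≫ m = h

variable (C) in
/-- A unital category: pointed, finitely complete, and the product inclusions
`⟨1,0⟩ : X → X × Y` and `⟨0,1⟩ : Y → X × Y` are jointly strongly epimorphic. -/
class Unital [HasZeroObject C] [HasZeroMorphisms C] [HasFiniteLimits C] : Prop where
  jse : ∀ X Y : C, JointlyStrongEpi (prod.lift (𝟙 X) (0 : X ⟶ Y)) (prod.lift (0 : Y ⟶ X) (𝟙 Y))

/-- `f : X ⟶ A` and `g : Y ⟶ A` Huq-commute: there is a cooperator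
`φ : X × Y ⟶ A` with `φ∘⟨1,0⟩ = f` and `φ∘⟨0,1⟩ = g`. -/
def HuqCommute [HasZeroMorphisms C] [HasFiniteLimits C] {X Y A : C} (f : X ⟶ A) (g : Y ⟶ A) : Prop :=
  ∃ φ : X ⨯ Y ⟶ A, prod.lift (𝟙 X) 0 ≫ φ = f ∧ prod.lift 0 (𝟙 Y) ≫ φ = g

variable [HasZeroMorphisms C] [HasFiniteLimits C]

/-- `(r₁, r₂) : R ⇉ A` is an internal equivalence relation. -/
structure IsEquivRelation {R A : C} (r₁ r₂ : R ⟶ A) : Prop where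
  mono : Mono (prod.lift r₁ r₂)
  refl : ∃ e : A ⟶ R, e ≫ r₁ = 𝟙 A ∧ e ≫ r₂ = 𝟙 A
  symm : ∃ σ : R ⟶ R, σ ≫ r₁ = r₂ ∧ σ ≫ r₂ = r₁
  trans : ∃ τ : pullback r₂ r₁ ⟶ R,
    τ ≫ r₁ = pullback.fst r₂ r₁ ≫ r₁ ∧ τ ≫ r₂ = pullback.snd r₂ r₁ ≫ r₂

/-- A monomorphism `k : X ⟶ A` is Bourn-normal if it is the zero class of some internal
equivalence relation on `A`, i.e. `k` is the pullback of the relation's pairing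
`⟨r₁,r₂⟩ : R → A × A` along `⟨1,0⟩ : A → A × A`. -/
def BournNormal {X A : C} (k : X ⟶ A) : Prop :=
  Mono k ∧ ∃ (R : C) (r₁ r₂ : R ⟶ A) (_ : IsEquivRelation r₁ r₂) (κ : X ⟶ R),
    IsPullback κ k (prod.lift r₁ r₂) (prod.lift (𝟙 A) 0)

/-!
A generalized element of `R □₀ S` lying over `0 ∈ X × Y` is a pair `(σ, ρ) ∈ S ×_A R` with
`s₁ σ = 0` and `r₂ ρ = 0`. The pullback squares defining `k` and `l` say precisely that `κ` is a
kernel of `r₂` with `k = r₁ κ`, and that `λ` is a kernel of `s₁` with `l = s₂ λ`. Hence such a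
pair is the same as a pair `(x, y) ∈ X × Y` with `k x = l y`, i.e. a point of `X ×_A Y`.
-/

namespace CategoryTheory

section ZeroClass

variable {R A X : C} {f g : R ⟶ A} {κ : X ⟶ R} {k : X ⟶ A}

lemma IsPullback.swap_prodLift_zero_id (h : IsPullback κ k (prod.lift f g) (prod.lift 0 (𝟙 A))) :
    IsPullback κ k (prod.lift g f) (prod.lift (𝟙 A) 0) :=
  h.of_iso (Iso.refl _) (Iso.refl _) (Iso.refl _) (prod.braiding A A)
    (by simp) (by simp) (by ext <;> simp [prod.lift_fst, prod.lift_snd])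
    (by ext <;> simp [prod.lift_fst, prod.lift_snd])

variable (h : IsPullback κ k (prod.lift f g) (prod.lift (𝟙 A) 0))
include h

lemma IsPullback.fst_comp_eq_snd_of_prodLift : κ ≫ f = k := by
  simpa [prod.lift_fst] using h.w =≫ prod.fst

lemma IsPullback.fst_comp_eq_zero_of_prodLift : κ ≫ g = 0 := by
  simpa [prod.lift_snd] using h.w =≫ prod.snd

def IsPullback.isLimitKernelForkOfProdLift :
    IsLimit (KernelFork.ofι κ h.fst_comp_eq_zero_of_prodLift) :=
  KernelFork.IsLimit.ofι _ _
    (fun x hx => h.lift x (x ≫ f) (by ext <;> simp [prod.lift_fst, prod.lift_snd, hx]))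
    (fun _ _ => h.lift_fst _ _ _)
    (fun x _ m hm => h.hom_ext (by simp [hm]) (by
      simp [← h.fst_comp_eq_snd_of_prodLift, reassoc_of% hm]))

end ZeroClass

section BoxZero

variable {R S A X Y : C} {r₁ r₂ : R ⟶ A} {s₁ s₂ : S ⟶ A}

variable (r₁ r₂ s₁ s₂) in
/-- `pullback (boxZeroPairing r₁ r₂ s₁ s₂) (prod.map k l)` is `R □₀ S`, with `ψ` and `θ` its
`pullback.fst` and `pullback.snd`. -/
abbrev boxZeroPairing : pullback s₂ r₁ ⟶ A ⨯ A :=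
  prod.lift (pullback.fst s₂ r₁ ≫ s₁) (pullback.snd s₂ r₁ ≫ r₂)

variable {k : X ⟶ A} {κ : X ⟶ R} {l : Y ⟶ A} {lam : Y ⟶ S}
  (hk : IsPullback κ k (prod.lift r₁ r₂) (prod.lift (𝟙 A) 0))
  (hl : IsPullback lam l (prod.lift s₂ s₁) (prod.lift (𝟙 A) 0))

lemma boxZero_snd_comp_eq_zero {T : C}
    (x : T ⟶ pullback (boxZeroPairing r₁ r₂ s₁ s₂) (prod.map k l))
    (hx : x ≫ pullback.snd _ _ = 0) :
    (x ≫ pullback.fst _ _ ≫ pullback.snd s₂ r₁) ≫ r₂ = 0 := by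
  simpa [prod.lift_snd, reassoc_of% hx] using x ≫= pullback.condition =≫ prod.snd

lemma boxZero_fst_comp_eq_zero {T : C}
    (x : T ⟶ pullback (boxZeroPairing r₁ r₂ s₁ s₂) (prod.map k l))
    (hx : x ≫ pullback.snd _ _ = 0) :
    (x ≫ pullback.fst _ _ ≫ pullback.fst s₂ r₁) ≫ s₁ = 0 := by
  simpa [prod.lift_fst, reassoc_of% hx] using x ≫= pullback.condition =≫ prod.fst

include hk hl

def pullbackToBoxZero : pullback k l ⟶ pullback (boxZeroPairing r₁ r₂ s₁ s₂) (prod.map k l) :=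
  pullback.lift
    (pullback.lift (pullback.snd k l ≫ lam) (pullback.fst k l ≫ κ) (by
      simp [hl.fst_comp_eq_snd_of_prodLift, hk.fst_comp_eq_snd_of_prodLift, pullback.condition]))
    0 (by
      ext <;> simp [prod.lift_fst, prod.lift_snd, pullback.lift_fst_assoc, pullback.lift_snd_assoc,
        hl.fst_comp_eq_zero_of_prodLift, hk.fst_comp_eq_zero_of_prodLift])

@[simp]
lemma pullbackToBoxZero_fst_fst :
    pullbackToBoxZero hk hl ≫ pullback.fst _ _ ≫ pullback.fst s₂ r₁ = pullback.snd k l ≫ lam := by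
  simp [pullbackToBoxZero, pullback.lift_fst_assoc, pullback.lift_fst]

@[simp]
lemma pullbackToBoxZero_fst_snd :
    pullbackToBoxZero hk hl ≫ pullback.fst _ _ ≫ pullback.snd s₂ r₁ = pullback.fst k l ≫ κ := by
  simp [pullbackToBoxZero, pullback.lift_fst_assoc, pullback.lift_snd]

lemma mono_pullbackToBoxZero : Mono (pullbackToBoxZero hk hl) := by
  have : Mono κ := Fork.IsLimit.mono hk.isLimitKernelForkOfProdLift
  have : Mono lam := Fork.IsLimit.mono hl.isLimitKernelForkOfProdLift
  refine ⟨fun a b hab => pullback.hom_ext ((cancel_mono κ).1 ?_) ((cancel_mono lam).1 ?_)⟩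
  · simpa using hab =≫ pullback.fst _ _ ≫ pullback.snd s₂ r₁
  · simpa using hab =≫ pullback.fst _ _ ≫ pullback.fst s₂ r₁

lemma pullbackToBoxZero_snd : pullbackToBoxZero hk hl ≫ pullback.snd _ _ = 0 :=
  pullback.lift_snd _ _ _

def isLimitPullbackToBoxZero :
    IsLimit (KernelFork.ofι (pullbackToBoxZero hk hl) (pullbackToBoxZero_snd hk hl)) :=
  haveI := mono_pullbackToBoxZero hk hl
  KernelFork.IsLimit.ofι' _ _ fun x hx => by
    obtain ⟨u, hu⟩ : { u : _ ⟶ X // u ≫ κ = _ } :=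
      KernelFork.IsLimit.lift' hk.isLimitKernelForkOfProdLift _ (boxZero_snd_comp_eq_zero x hx)
    obtain ⟨w, hw⟩ : { w : _ ⟶ Y // w ≫ lam = _ } :=
      KernelFork.IsLimit.lift' hl.isLimitKernelForkOfProdLift _ (boxZero_fst_comp_eq_zero x hx)
    have huw : u ≫ k = w ≫ l := by
      rw [← hk.fst_comp_eq_snd_of_prodLift, ← hl.fst_comp_eq_snd_of_prodLift, reassoc_of% hu,
        reassoc_of% hw, pullback.condition]
    refine ⟨pullback.lift u w huw, pullback.hom_ext (pullback.hom_ext ?_ ?_) ?_⟩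
    · simp [pullback.lift_snd_assoc, hw]
    · simp [pullback.lift_fst_assoc, hu]
    · simp [pullbackToBoxZero_snd, hx]

end BoxZero

end CategoryTheory

theorem stmt19_general
    {R S A X Y : C} (r₁ r₂ : R ⟶ A) (s₁ s₂ : S ⟶ A)
    (k : X ⟶ A) (κ : X ⟶ R)
    (hk : IsPullback κ k (prod.lift r₁ r₂) (prod.lift (𝟙 A) 0))
    (l : Y ⟶ A) (lam : Y ⟶ S)
    (hl : IsPullback lam l (prod.lift s₁ s₂) (prod.lift 0 (𝟙 A))) :
    Nonempty (kernel (pullback.snd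
      (prod.lift (pullback.fst s₂ r₁ ≫ s₁) (pullback.snd s₂ r₁ ≫ r₂)) (prod.map k l))
      ≅ pullback k l) :=
  ⟨(kernelIsKernel _).conePointUniqueUpToIso
    (isLimitPullbackToBoxZero hk hl.swap_prodLift_zero_id)⟩

/-- With notation as above, the kernel of the comparison `θ : R □₀ S → X × Y` is
isomorphic to the pullback `X ×_A Y` of `k` and `l`. -/
theorem stmt19 [HasZeroObject C]
    {R S A X Y : C} (r₁ r₂ : R ⟶ A) (s₁ s₂ : S ⟶ A)
    (hR : IsEquivRelation r₁ r₂) (hS : IsEquivRelation s₁ s₂)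
    (k : X ⟶ A) (κ : X ⟶ R)
    (hk : IsPullback κ k (prod.lift r₁ r₂) (prod.lift (𝟙 A) 0))
    (l : Y ⟶ A) (lam : Y ⟶ S)
    (hl : IsPullback lam l (prod.lift s₁ s₂) (prod.lift 0 (𝟙 A))) :
    Nonempty (kernel (pullback.snd
      (prod.lift (pullback.fst s₂ r₁ ≫ s₁) (pullback.snd s₂ r₁ ≫ r₂)) (prod.map k l))
      ≅ pullback k l) :=
  stmt19_general r₁ r₂ s₁ s₂ k κ hk l lam hl
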